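/- Let B : ℝ³ → ℝ³ be continuously differentiable with B(y) ≠ 0 for all y ∈ ℝ³, and let p : ℝ³ → ℝ be twice continuously differentiable with ∇p(y)·B(y) = 0 for all y. Fix x₀, v₀ ∈ ℝ³ and ω > 0. Then for all t ≥ 0 the exact identity holds: p(x_ω(t)) − p(x₀) = (1/ω)[ ∇p(x_ω(t))·(b(x_ω(t)) × v_ω(t)) / |B(x_ω(t))| − ∇p(x₀)·(b(x₀) × v₀) / |B(x₀)| ] − (1/ω) ∫₀ᵗ v_ω(s) · (d/ds)[ (∇p(x_ω(s)) × b(x_ω(s))) / |B(x_ω(s))| ] ds. -/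

import Mathlib

noncomputable section

open Real Filter Topology MeasureTheory intervalIntegral Bornology

abbrev E3 : Type := EuclideanSpace ℝ (Fin 3)

def cross3 (u v : E3) : E3 :=
  (WithLp.equiv 2 (Fin 3 → ℝ)).symm
    ![u 1 * v 2 - u 2 * v 1, u 2 * v 0 - u 0 * v 2, u 0 * v 1 - u 1 * v 0]

def divg (F : E3 → E3) (y : E3) : ℝ :=
  ∑ i : Fin 3, fderiv ℝ F y (EuclideanSpace.single i (1:ℝ)) i

def curl3 (F : E3 → E3) (y : E3) : E3 :=
  (WithLp.equiv 2 (Fin 3 → ℝ)).symm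
    ![fderiv ℝ F y (EuclideanSpace.single 1 (1:ℝ)) 2 - fderiv ℝ F y (EuclideanSpace.single 2 (1:ℝ)) 1,
      fderiv ℝ F y (EuclideanSpace.single 2 (1:ℝ)) 0 - fderiv ℝ F y (EuclideanSpace.single 0 (1:ℝ)) 2,
      fderiv ℝ F y (EuclideanSpace.single 0 (1:ℝ)) 1 - fderiv ℝ F y (EuclideanSpace.single 1 (1:ℝ)) 0]

def bdir (B : E3 → E3) (y : E3) : E3 := ‖B y‖⁻¹ • B y

def IsLorentzSol (B : E3 → E3) (ω : ℝ) (x₀ v₀ : E3) (x : ℝ → E3) : Prop :=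
  x 0 = x₀ ∧ deriv x 0 = v₀ ∧ Differentiable ℝ x ∧
    ∀ t : ℝ, HasDerivAt (deriv x) (ω • cross3 (deriv x t) (B (x t))) t

def IsLimitSol (B : E3 → E3) (x₀ v₀ : E3) (x : ℝ → E3) (h : ℝ → ℝ) : Prop :=
  x 0 = x₀ ∧ h 0 = (inner ℝ v₀ (bdir B x₀) : ℝ) ∧
    (∀ t : ℝ, HasDerivAt x (h t • bdir B (x t)) t) ∧
    (∀ t : ℝ, HasDerivAt h ((‖v₀‖ ^ 2 - h t ^ 2) / 2 * divg (bdir B) (x t)) t)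

def IsCkBounded (k : ℕ) (B : E3 → E3) : Prop :=
  ContDiff ℝ k B ∧ ∀ i ≤ k, ∃ M : ℝ, ∀ y : E3, ‖iteratedFDeriv ℝ i B y‖ ≤ M

def MinimalGrowth (γ : ℝ) (B : E3 → E3) : Prop :=
  ∃ R C : ℝ, 0 < R ∧ 0 < C ∧ ∀ y : E3, R ≤ ‖y‖ → C / ‖y‖ ^ γ ≤ ‖B y‖

/-
The field `U = |B|⁻¹ (∇p × b)` is built so that the Lorentz force pairs with it into the
gradient: since `∇p ⊥ B`, Lagrange's identity gives `⟪U, v × B⟫ = ⟪∇p, v⟫`. Along a Lorentz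
trajectory, `d/dt ⟪U(x), v⟫ = ω ⟪∇p(x), v⟫ + ⟪d/dt U(x), v⟫`, so
`p(x) - ω⁻¹ ⟪U(x), v⟫` has derivative `-ω⁻¹ ⟪v, d/dt U(x)⟫`, and the identity is the
fundamental theorem of calculus for this function; the boundary terms are rewritten with the
scalar triple product.
-/

lemma cross3_apply (u v : E3) (i : Fin 3) : cross3 u v i =
    ![u 1 * v 2 - u 2 * v 1, u 2 * v 0 - u 0 * v 2, u 0 * v 1 - u 1 * v 0] i := by
  simp [cross3]

lemma cross3_smul_right (r : ℝ) (a b : E3) : cross3 a (r • b) = r • cross3 a b := by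
  ext i; fin_cases i <;> simp [cross3_apply] <;> ring

lemma inner_cross3_cross3 (a b c d : E3) : (inner ℝ (cross3 a b) (cross3 c d) : ℝ)
    = (inner ℝ a c : ℝ) * (inner ℝ b d : ℝ) - (inner ℝ a d : ℝ) * (inner ℝ b c : ℝ) := by
  simp [cross3_apply, PiLp.inner_apply, Fin.sum_univ_three]; ring

lemma inner_cross3_left (a b c : E3) :
    (inner ℝ (cross3 a b) c : ℝ) = (inner ℝ a (cross3 b c) : ℝ) := by
  simp [cross3_apply, PiLp.inner_apply, Fin.sum_univ_three]; ring

lemma inner_cross3_cross3_of_inner_eq_zero {g w n : E3} (h : (inner ℝ g n : ℝ) = 0) :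
    (inner ℝ (cross3 g n) (cross3 w n) : ℝ) = ‖n‖ ^ 2 * (inner ℝ g w : ℝ) := by
  rw [inner_cross3_cross3, h, real_inner_self_eq_norm_sq]; ring

lemma contDiff_cross3 {n : WithTop ℕ∞} : ContDiff ℝ n (fun q : E3 × E3 => cross3 q.1 q.2) := by
  have h1 (i : Fin 3) : ContDiff ℝ n (fun q : E3 × E3 => q.1 i) :=
    (EuclideanSpace.proj i : E3 →L[ℝ] ℝ).contDiff.comp contDiff_fst
  have h2 (i : Fin 3) : ContDiff ℝ n (fun q : E3 × E3 => q.2 i) :=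
    (EuclideanSpace.proj i : E3 →L[ℝ] ℝ).contDiff.comp contDiff_snd
  refine contDiff_euclidean.2 fun i => ?_
  fin_cases i <;> simp [cross3_apply] <;>
    exact ((h1 _).mul (h2 _)).sub ((h1 _).mul (h2 _))

lemma ContDiffAt.cross3 {F : Type*} [NormedAddCommGroup F] [NormedSpace ℝ F]
    {n : WithTop ℕ∞} {f g : F → E3} {y : F} (hf : ContDiffAt ℝ n f y) (hg : ContDiffAt ℝ n g y) :
    ContDiffAt ℝ n (fun z => cross3 (f z) (g z)) y :=
  contDiff_cross3.contDiffAt.comp y (hf.prodMk hg)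

section Gradient

variable {F : Type*} [NormedAddCommGroup F] [InnerProductSpace ℝ F] [CompleteSpace F]

lemma ContDiff.gradient {n : WithTop ℕ∞} {f : F → ℝ} (hf : ContDiff ℝ (n + 1) f) :
    ContDiff ℝ n (gradient f) :=
  (InnerProductSpace.toDual ℝ F).symm.contDiff.comp (hf.fderiv_right le_rfl)

lemma HasGradientAt.comp_hasDerivAt {f : F → ℝ} {g : F} {γ : ℝ → F} {v : F} {t : ℝ}
    (hf : HasGradientAt f g (γ t)) (hγ : HasDerivAt γ v t) :
    HasDerivAt (fun τ => f (γ τ)) (inner ℝ g v) t := by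
  simpa using (show HasDerivAt (fun τ => f (γ τ)) _ t from hf.hasFDerivAt.comp_hasDerivAt t hγ)

end Gradient

lemma contDiffAt_bdir {n : WithTop ℕ∞} {B : E3 → E3} {y : E3} (hB : ContDiffAt ℝ n B y)
    (hy : B y ≠ 0) : ContDiffAt ℝ n (bdir B) y :=
  (hB.norm ℝ hy).inv (norm_ne_zero_iff.2 hy) |>.smul hB

def driftField (B : E3 → E3) (p : E3 → ℝ) (y : E3) : E3 :=
  ‖B y‖⁻¹ • cross3 (gradient p y) (bdir B y)

lemma contDiff_driftField {n : WithTop ℕ∞} {B : E3 → E3} {p : E3 → ℝ} (hB : ContDiff ℝ n B)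
    (hB0 : ∀ y, B y ≠ 0) (hp : ContDiff ℝ (n + 1) p) : ContDiff ℝ n (driftField B p) :=
  contDiff_iff_contDiffAt.2 fun y =>
    ((hB.contDiffAt.norm ℝ (hB0 y)).inv (norm_ne_zero_iff.2 (hB0 y))).smul
      (hp.gradient.contDiffAt.cross3 (contDiffAt_bdir hB.contDiffAt (hB0 y)))

lemma inner_driftField (B : E3 → E3) (p : E3 → ℝ) (y w : E3) :
    (inner ℝ (driftField B p y) w : ℝ)
      = (inner ℝ (gradient p y) (cross3 (bdir B y) w) : ℝ) / ‖B y‖ := by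
  rw [driftField, real_inner_smul_left, inner_cross3_left, inv_mul_eq_div]

lemma inner_driftField_cross3 {B : E3 → E3} {p : E3 → ℝ} {y : E3}
    (horth : (inner ℝ (gradient p y) (B y) : ℝ) = 0) (hy : B y ≠ 0) (w : E3) :
    (inner ℝ (driftField B p y) (cross3 w (B y)) : ℝ) = inner ℝ (gradient p y) w := by
  have hn : ‖B y‖ ≠ 0 := norm_ne_zero_iff.2 hy
  rw [driftField, bdir, cross3_smul_right, real_inner_smul_left, real_inner_smul_left,
    inner_cross3_cross3_of_inner_eq_zero horth]
  field_simp

namespace IsLorentzSol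

variable {B : E3 → E3} {ω : ℝ} {x₀ v₀ : E3} {x : ℝ → E3}

lemma differentiable (hx : IsLorentzSol B ω x₀ v₀ x) : Differentiable ℝ x :=
  hx.2.2.1

lemma hasDerivAt_deriv (hx : IsLorentzSol B ω x₀ v₀ x) (t : ℝ) :
    HasDerivAt (deriv x) (ω • cross3 (deriv x t) (B (x t))) t :=
  hx.2.2.2 t

lemma hasDerivAt (hx : IsLorentzSol B ω x₀ v₀ x) (t : ℝ) : HasDerivAt x (deriv x t) t :=
  (hx.differentiable t).hasDerivAt

lemma continuous_deriv (hx : IsLorentzSol B ω x₀ v₀ x) : Continuous (deriv x) :=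
  continuous_iff_continuousAt.2 fun t => (hx.hasDerivAt_deriv t).continuousAt

lemma hasDerivAt_comp (hx : IsLorentzSol B ω x₀ v₀ x) {U : E3 → E3} (hU : Differentiable ℝ U)
    (t : ℝ) : HasDerivAt (fun s => U (x s)) (fderiv ℝ U (x t) (deriv x t)) t :=
  (hU (x t)).hasFDerivAt.comp_hasDerivAt t (hx.hasDerivAt t)

lemma continuous_inner_deriv_deriv_comp (hx : IsLorentzSol B ω x₀ v₀ x) {U : E3 → E3}
    (hU : ContDiff ℝ 1 U) :
    Continuous fun s => (inner ℝ (deriv x s) (deriv (fun σ => U (x σ)) s) : ℝ) := by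
  have hderiv : deriv (fun σ => U (x σ)) = fun s => fderiv ℝ U (x s) (deriv x s) :=
    funext fun s => (hx.hasDerivAt_comp (hU.differentiable one_ne_zero) s).deriv
  rw [hderiv]
  exact hx.continuous_deriv.inner
    (((hU.continuous_fderiv one_ne_zero).comp hx.differentiable.continuous).clm_apply hx.continuous_deriv)

lemma hasDerivAt_inner_comp_deriv (hx : IsLorentzSol B ω x₀ v₀ x) {U : E3 → E3}
    (hU : Differentiable ℝ U) (t : ℝ) :
    HasDerivAt (fun s => (inner ℝ (U (x s)) (deriv x s) : ℝ))
      (ω * inner ℝ (U (x t)) (cross3 (deriv x t) (B (x t)))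
        + inner ℝ (deriv x t) (deriv (fun σ => U (x σ)) t)) t := by
  have hUx := hx.hasDerivAt_comp hU t
  refine (hUx.inner ℝ (hx.hasDerivAt_deriv t)).congr_deriv ?_
  rw [hUx.deriv, real_inner_smul_right, real_inner_comm _ (deriv x t)]

lemma hasDerivAt_sub_inner_driftField (hx : IsLorentzSol B ω x₀ v₀ x) (hω : ω ≠ 0)
    {p : E3 → ℝ} (hp : Differentiable ℝ p) (hU : Differentiable ℝ (driftField B p))
    (hB0 : ∀ y, B y ≠ 0) (horth : ∀ y, (inner ℝ (gradient p y) (B y) : ℝ) = 0) (t : ℝ) :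
    HasDerivAt (fun s => p (x s) - ω⁻¹ * inner ℝ (driftField B p (x s)) (deriv x s))
      (-ω⁻¹ * inner ℝ (deriv x t) (deriv (fun σ => driftField B p (x σ)) t)) t := by
  have hpx := (hp (x t)).hasGradientAt.comp_hasDerivAt (hx.hasDerivAt t)
  refine (hpx.sub ((hx.hasDerivAt_inner_comp_deriv hU t).const_mul ω⁻¹)).congr_deriv ?_
  rw [inner_driftField_cross3 (horth (x t)) (hB0 (x t))]
  field_simp
  ring

end IsLorentzSol

theorem pressure_integration_by_parts_identity
    (B : E3 → E3) (hB : ContDiff ℝ 1 B) (hB0 : ∀ y : E3, B y ≠ 0)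
    (p : E3 → ℝ) (hp : ContDiff ℝ 2 p)
    (horth : ∀ y : E3, (inner ℝ (gradient p y) (B y) : ℝ) = 0)
    (x₀ v₀ : E3) (ω : ℝ) (hω : 0 < ω) (xω : ℝ → E3)
    (hxω : IsLorentzSol B ω x₀ v₀ xω) :
    ∀ t ≥ (0:ℝ),
      p (xω t) - p x₀
        = (1 / ω) * ((inner ℝ (gradient p (xω t)) (cross3 (bdir B (xω t)) (deriv xω t)) : ℝ)
              / ‖B (xω t)‖
            - (inner ℝ (gradient p x₀) (cross3 (bdir B x₀) v₀) : ℝ) / ‖B x₀‖)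
          - (1 / ω) * ∫ s in (0:ℝ)..t,
              (inner ℝ (deriv xω s)
                (deriv (fun σ : ℝ =>
                  ‖B (xω σ)‖⁻¹ • cross3 (gradient p (xω σ)) (bdir B (xω σ))) s) : ℝ) := by
  intro t _
  have hU : ContDiff ℝ 1 (driftField B p) := contDiff_driftField hB hB0 hp
  have hint : IntervalIntegrable (fun s => -ω⁻¹ *
      inner ℝ (deriv xω s) (deriv (fun σ => driftField B p (xω σ)) s)) volume 0 t :=
    ((hxω.continuous_inner_deriv_deriv_comp hU).const_mul (-ω⁻¹)).intervalIntegrable 0 t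
  have hFTC := integral_eq_sub_of_hasDerivAt
    (fun s _ => hxω.hasDerivAt_sub_inner_driftField hω.ne' (hp.differentiable two_ne_zero)
      (hU.differentiable one_ne_zero) hB0 horth s) hint
  rw [intervalIntegral.integral_const_mul, inner_driftField, inner_driftField, hxω.1, hxω.2.1]
    at hFTC
  unfold driftField at hFTC
  linear_combination -hFTC
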